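/- On ℝ³ with coordinates (x,y,z), let ξ = 2∂/∂z, η = (1/2)(-y dx + dz), φ(∂/∂x) = -∂/∂y, φ(∂/∂y) = ∂/∂x + y∂/∂z, φ(∂/∂z) = 0, and g = εη⊗η + (1/4)(dx² + dy²) for ε = ±1. Then (ℝ³, φ, ξ, η, g) is a Sasakian pseudo-metric manifold whose Ricci tensor is Ric = -2εg + 4η⊗η. -/

import Mathlib

/-!
STATEMENT 9: On `ℝ³` with coordinates `(x, y, z)`, the structure
`ξ = 2∂z`, `η = ½(-y dx + dz)`, `φ(∂x) = -∂y`, `φ(∂y) = ∂x + y ∂z`,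
`φ(∂z) = 0`, `g = ε η⊗η + ¼(dx² + dy²)` (with `ε = ±1`) is a Sasakian
pseudo-metric structure, and its Ricci tensor is `Ric = -2εg + 4η⊗η`.

Vector fields are represented as smooth maps `ℝ×ℝ×ℝ → ℝ×ℝ×ℝ` in the global
coordinate frame; the Levi-Civita connection `nab` of `g` is characterized by
its usual axioms (tensoriality in the first slot, Leibniz rule, metric
compatibility, torsion-freeness).
-/

noncomputable section

namespace Stmt9

/-- the underlying manifold `ℝ³`, a point being `(x, y, z)`. -/
abbrev P : Type := ℝ × ℝ × ℝ

/-- derivative of a function along a vector field. -/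
def der (X : P → P) (f : P → ℝ) : P → ℝ := fun p => fderiv ℝ f p (X p)

/-- Lie bracket of vector fields. -/
def bracket (X Y : P → P) : P → P := fun p => fderiv ℝ Y p (X p) - fderiv ℝ X p (Y p)

/-- `ξ = 2 ∂/∂z`. -/
def ξ : P → P := fun _ => (0, 0, 2)

/-- `η = ½(-y dx + dz)`. -/
def η (X : P → P) : P → ℝ := fun p => (1 / 2) * (-(p.2.1) * (X p).1 + (X p).2.2)

/-- `φ(∂x) = -∂y`, `φ(∂y) = ∂x + y ∂z`, `φ(∂z) = 0`. -/
def φ (X : P → P) : P → P := fun p => ((X p).2.1, -(X p).1, p.2.1 * (X p).2.1)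

/-- `g = ε η⊗η + ¼(dx² + dy²)`. -/
def g (ε : ℝ) (X Y : P → P) : P → ℝ := fun p =>
  ε * η X p * η Y p + (1 / 4) * ((X p).1 * (Y p).1 + (X p).2.1 * (Y p).2.1)

def Smooth (X : P → P) : Prop := ContDiff ℝ (⊤ : ℕ∞) X

/-- the coordinate frame, used to compute the trace defining the Ricci tensor. -/
def e1 : P → P := fun _ => (1, 0, 0)
def e2 : P → P := fun _ => (0, 1, 0)
def e3 : P → P := fun _ => (0, 0, 1)

/-- curvature tensor of a connection `nab`. -/
def RCurv (nab : (P → P) → (P → P) → (P → P)) (X Y Z : P → P) : P → P :=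
  nab X (nab Y Z) - nab Y (nab X Z) - nab (bracket X Y) Z

/-- Ricci tensor of `nab`: the coordinate trace `Ric(X,Y) = tr (Z ↦ R(Z,X)Y)`. -/
def Ric (nab : (P → P) → (P → P) → (P → P)) (X Y : P → P) : P → ℝ := fun p =>
  (RCurv nab e1 X Y p).1 + (RCurv nab e2 X Y p).2.1 + (RCurv nab e3 X Y p).2.2

def c1 : P := (1,0,0)
def c2 : P := (0,1,0)
def c3 : P := (0,0,1)

lemma Smooth.dAt {Y : P → P} (hY : Smooth Y) (p : P) : DifferentiableAt ℝ Y p :=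
  (hY.differentiable (by simp)).differentiableAt

lemma hfd {Y : P → P} (hY : Smooth Y) (p : P) : HasFDerivAt Y (fderiv ℝ Y p) p :=
  (hY.dAt p).hasFDerivAt

lemma fd1 {Y : P → P} (hY : Smooth Y) (p v : P) :
    fderiv ℝ (fun q => (Y q).1) p v = (fderiv ℝ Y p v).1 := by
  rw [((hfd hY p).fst).fderiv]; rfl

lemma fd2 {Y : P → P} (hY : Smooth Y) (p v : P) :
    fderiv ℝ (fun q => (Y q).2.1) p v = (fderiv ℝ Y p v).2.1 := by
  rw [((hfd hY p).snd.fst).fderiv]; rfl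

lemma fd3 {Y : P → P} (hY : Smooth Y) (p v : P) :
    fderiv ℝ (fun q => (Y q).2.2) p v = (fderiv ℝ Y p v).2.2 := by
  rw [((hfd hY p).snd.snd).fderiv]; rfl

lemma sm1 {Y : P → P} (hY : Smooth Y) : ContDiff ℝ (⊤ : ℕ∞) (fun q => (Y q).1) :=
  contDiff_fst.comp hY
lemma sm2 {Y : P → P} (hY : Smooth Y) : ContDiff ℝ (⊤ : ℕ∞) (fun q => (Y q).2.1) :=
  contDiff_fst.comp (contDiff_snd.comp hY)
lemma sm3 {Y : P → P} (hY : Smooth Y) : ContDiff ℝ (⊤ : ℕ∞) (fun q => (Y q).2.2) :=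
  contDiff_snd.comp (contDiff_snd.comp hY)

lemma lin_expand (L : P →L[ℝ] P) (w : P) :
    L w = w.1 • L c1 + w.2.1 • L c2 + w.2.2 • L c3 := by
  have h : w = w.1 • c1 + w.2.1 • c2 + w.2.2 • c3 := by
    simp [c1, c2, c3, Prod.ext_iff]
  calc L w = L (w.1 • c1 + w.2.1 • c2 + w.2.2 • c3) := by rw [← h]
    _ = _ := by simp

lemma symm2 {Y : P → P} (hY : Smooth Y) (p v w : P) :
    fderiv ℝ (fderiv ℝ Y) p v w = fderiv ℝ (fderiv ℝ Y) p w v :=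
  (hY.contDiffAt.isSymmSndFDerivAt (by norm_num; exact WithTop.coe_le_coe.mpr le_top)) v w

lemma sm_fderiv {Y : P → P} (hY : Smooth Y) : ContDiff ℝ (⊤ : ℕ∞) (fderiv ℝ Y) :=
  hY.fderiv_right (by simp)

lemma hfd_fderiv {Y : P → P} (hY : Smooth Y) (p : P) :
    HasFDerivAt (fderiv ℝ Y) (fderiv ℝ (fderiv ℝ Y) p) p :=
  ((sm_fderiv hY).differentiable (by simp)).differentiableAt.hasFDerivAt

lemma sm_dYX {X Y : P → P} (hX : Smooth X) (hY : Smooth Y) :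
    ContDiff ℝ (⊤ : ℕ∞) (fun q => fderiv ℝ Y q (X q)) :=
  (sm_fderiv hY).clm_apply hX

/-- Christoffel correction term: `∇_X Y = dY(X) + γv(p, X p, Y p)`. -/
def γv (ε : ℝ) (p u v : P) : P :=
  (ε / 2 * p.2.1 * (u.1 * v.2.1 + u.2.1 * v.1) - ε / 2 * (u.2.1 * v.2.2 + u.2.2 * v.2.1),
   -(ε * p.2.1) * (u.1 * v.1) + ε / 2 * (u.1 * v.2.2 + u.2.2 * v.1),
   (ε / 2 * (p.2.1 * p.2.1) - 1 / 2) * (u.1 * v.2.1 + u.2.1 * v.1)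
     - ε / 2 * p.2.1 * (u.2.1 * v.2.2 + u.2.2 * v.2.1))

def D (ε : ℝ) (X Y : P → P) : P → P := fun p => fderiv ℝ Y p (X p) + γv ε p (X p) (Y p)

/-- formal derivative of `γv` along direction `w`, with `du, dv` the derivatives of the fields. -/
def γd (ε : ℝ) (p u v w du dv : P) : P :=
  (ε * w.2.1 / 2 * (u.1 * v.2.1 + u.2.1 * v.1)
      + ε * p.2.1 / 2 * (du.1 * v.2.1 + u.1 * dv.2.1 + du.2.1 * v.1 + u.2.1 * dv.1)
      - ε / 2 * (du.2.1 * v.2.2 + u.2.1 * dv.2.2 + du.2.2 * v.2.1 + u.2.2 * dv.2.1),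
   -(ε * w.2.1) * (u.1 * v.1) - ε * p.2.1 * (du.1 * v.1 + u.1 * dv.1)
      + ε / 2 * (du.1 * v.2.2 + u.1 * dv.2.2 + du.2.2 * v.1 + u.2.2 * dv.1),
   ε * p.2.1 * w.2.1 * (u.1 * v.2.1 + u.2.1 * v.1)
      + (ε * p.2.1 ^ 2 / 2 - 1 / 2) * (du.1 * v.2.1 + u.1 * dv.2.1 + du.2.1 * v.1 + u.2.1 * dv.1)
      - ε / 2 * w.2.1 * (u.2.1 * v.2.2 + u.2.2 * v.2.1)
      - ε / 2 * p.2.1 * (du.2.1 * v.2.2 + u.2.1 * dv.2.2 + du.2.2 * v.2.1 + u.2.2 * dv.2.1))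

lemma hfd_gamma (ε : ℝ) {X Y : P → P} (hX : Smooth X) (hY : Smooth Y) (p : P) :
    ∃ L : P →L[ℝ] P, HasFDerivAt (fun q => γv ε q (X q) (Y q)) L p ∧
      ∀ w, L w = γd ε p (X p) (Y p) w (fderiv ℝ X p w) (fderiv ℝ Y p w) := by
  have hy : HasFDerivAt (fun q : P => q.2.1)
      ((ContinuousLinearMap.fst ℝ ℝ ℝ).comp (ContinuousLinearMap.snd ℝ ℝ (ℝ × ℝ))) p := by
    have h := (hasFDerivAt_id (𝕜 := ℝ) p).snd.fst
    rwa [ContinuousLinearMap.comp_id] at h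
  have hx1 := (hfd hX p).fst
  have hx2 := (hfd hX p).snd.fst
  have hx3 := (hfd hX p).snd.snd
  have hy1 := (hfd hY p).fst
  have hy2 := (hfd hY p).snd.fst
  have hy3 := (hfd hY p).snd.snd
  have h1 := ((hy.const_mul (ε / 2)).mul ((hx1.mul hy2).add (hx2.mul hy1))).sub
      (((hx2.mul hy3).add (hx3.mul hy2)).const_mul (ε / 2))
  have h2 := (((hy.const_mul ε).neg).mul (hx1.mul hy1)).add
      (((hx1.mul hy3).add (hx3.mul hy1)).const_mul (ε / 2))
  have h3 := ((((hy.mul hy).const_mul (ε / 2)).sub_const (1 / 2)).mul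
      ((hx1.mul hy2).add (hx2.mul hy1))).sub
      ((hy.const_mul (ε / 2)).mul ((hx2.mul hy3).add (hx3.mul hy2)))
  refine ⟨_, (h1.prodMk (h2.prodMk h3) : HasFDerivAt _ _ p), fun w => ?_⟩
  simp [γd, Prod.ext_iff]
  refine ⟨by ring, by ring, by ring⟩

/-- pointwise metric. -/
def gp (ε : ℝ) (p u v : P) : ℝ :=
  ε * ((1 / 2) * (-(p.2.1) * u.1 + u.2.2)) * ((1 / 2) * (-(p.2.1) * v.1 + v.2.2)) +
    (1 / 4) * (u.1 * v.1 + u.2.1 * v.2.1)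

lemma g_comm (ε : ℝ) (X Y : P → P) : g ε X Y = g ε Y X := by
  funext p; simp [g, η]; ring

lemma sm_e1 : Smooth e1 := contDiff_const
lemma sm_e2 : Smooth e2 := contDiff_const
lemma sm_e3 : Smooth e3 := contDiff_const

lemma bracket_const (c : P) (X : P → P) :
    bracket (fun _ => c) X = fun p => fderiv ℝ X p c := by
  funext p; simp [bracket]

lemma bracket_cc (a b : P) : bracket (fun _ => a) (fun _ => b) = 0 := by
  funext p; simp [bracket]

/-- nondegeneracy of the metric. -/
lemma nondeg {ε : ℝ} (hε : ε = 1 ∨ ε = -1) (p : P) (u v : P)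
    (h1 : gp ε p u c1 = gp ε p v c1) (h2 : gp ε p u c2 = gp ε p v c2)
    (h3 : gp ε p u c3 = gp ε p v c3) : u = v := by
  obtain ⟨u1, u2, u3⟩ := u
  obtain ⟨v1, v2, v3⟩ := v
  simp only [gp, c1, c2, c3] at h1 h2 h3
  rcases hε with h | h <;> subst h
  · have hA : -p.2.1 * u1 + u3 = -p.2.1 * v1 + v3 := by linear_combination 4 * h3
    have h1' : u1 = v1 := by linear_combination 4 * h1 + p.2.1 * hA
    have h2' : u2 = v2 := by linear_combination 4 * h2
    have h3' : u3 = v3 := by linear_combination hA + p.2.1 * h1'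
    simp [Prod.ext_iff, h1', h2', h3']
  · have hA : -p.2.1 * u1 + u3 = -p.2.1 * v1 + v3 := by linear_combination (-4) * h3
    have h1' : u1 = v1 := by linear_combination 4 * h1 - p.2.1 * hA
    have h2' : u2 = v2 := by linear_combination 4 * h2
    have h3' : u3 = v3 := by linear_combination hA + p.2.1 * h1'
    simp [Prod.ext_iff, h1', h2', h3']

/-- metric coefficient functions -/
lemma g_e11 (ε : ℝ) : g ε e1 e1 = fun p => ε / 4 * (p.2.1 * p.2.1) + 1 / 4 := by
  funext p; simp [g, η, e1]; ring
lemma g_e12 (ε : ℝ) : g ε e1 e2 = fun _ => 0 := by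
  funext p; simp [g, η, e1, e2]
lemma g_e13 (ε : ℝ) : g ε e1 e3 = fun p => -(ε / 4) * p.2.1 := by
  funext p; simp [g, η, e1, e3]; ring
lemma g_e22 (ε : ℝ) : g ε e2 e2 = fun _ => 1 / 4 := by
  funext p; simp [g, η, e2]
lemma g_e23 (ε : ℝ) : g ε e2 e3 = fun _ => 0 := by
  funext p; simp [g, η, e2, e3]
lemma g_e33 (ε : ℝ) : g ε e3 e3 = fun _ => ε / 4 := by
  funext p; simp [g, η, e3]; ring

lemma fd_g11 (ε : ℝ) (p v : P) :
    fderiv ℝ (g ε e1 e1) p v = ε / 4 * (v.2.1 * p.2.1 + p.2.1 * v.2.1) := by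
  rw [g_e11]
  have hy : HasFDerivAt (fun q : P => q.2.1)
      ((ContinuousLinearMap.fst ℝ ℝ ℝ).comp (ContinuousLinearMap.snd ℝ ℝ (ℝ × ℝ))) p := by
    have h := (hasFDerivAt_id (𝕜 := ℝ) p).snd.fst
    rwa [ContinuousLinearMap.comp_id] at h
  rw [(show HasFDerivAt (fun p : P => ε / 4 * (p.2.1 * p.2.1) + 1 / 4) _ p from
    (((hy.mul hy).const_mul (ε / 4)).add_const (1 / 4))).fderiv]
  simp; ring

lemma fd_g13 (ε : ℝ) (p v : P) :
    fderiv ℝ (g ε e1 e3) p v = -(ε / 4) * v.2.1 := by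
  rw [g_e13]
  have hy : HasFDerivAt (fun q : P => q.2.1)
      ((ContinuousLinearMap.fst ℝ ℝ ℝ).comp (ContinuousLinearMap.snd ℝ ℝ (ℝ × ℝ))) p := by
    have h := (hasFDerivAt_id (𝕜 := ℝ) p).snd.fst
    rwa [ContinuousLinearMap.comp_id] at h
  rw [(hy.const_mul (-(ε / 4))).fderiv]
  simp

lemma der_e1 (f : P → ℝ) (p : P) : der e1 f p = fderiv ℝ f p c1 := rfl
lemma der_e2 (f : P → ℝ) (p : P) : der e2 f p = fderiv ℝ f p c2 := rfl
lemma der_e3 (f : P → ℝ) (p : P) : der e3 f p = fderiv ℝ f p c3 := rfl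

lemma fd_g12 (ε : ℝ) (p v : P) : fderiv ℝ (g ε e1 e2) p v = 0 := by
  rw [g_e12]; simp
lemma fd_g22 (ε : ℝ) (p v : P) : fderiv ℝ (g ε e2 e2) p v = 0 := by
  rw [g_e22]; simp
lemma fd_g23 (ε : ℝ) (p v : P) : fderiv ℝ (g ε e2 e3) p v = 0 := by
  rw [g_e23]; simp
lemma fd_g33 (ε : ℝ) (p v : P) : fderiv ℝ (g ε e3 e3) p v = 0 := by
  rw [g_e33]; simp

section Koszul

variable {ε : ℝ} (nab : (P → P) → (P → P) → (P → P))
variable (nab_metric : ∀ X Y Z, Smooth X → Smooth Y → Smooth Z →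
      der X (g ε Y Z) = fun p => g ε (nab X Y) Z p + g ε Y (nab X Z) p)
variable (nab_torsion : ∀ X Y, Smooth X → Smooth Y → nab X Y - nab Y X = bracket X Y)

include nab_metric nab_torsion in
lemma koszul {X Y Z : P → P} (hX : Smooth X) (hY : Smooth Y) (hZ : Smooth Z)
    (bXY : bracket X Y = 0) (bXZ : bracket X Z = 0) (bYZ : bracket Y Z = 0) (p : P) :
    2 * g ε (nab X Y) Z p = der X (g ε Y Z) p + der Y (g ε X Z) p - der Z (g ε X Y) p := by
  have sXY : nab X Y = nab Y X := by
    have h := nab_torsion X Y hX hY; rw [bXY] at h; exact sub_eq_zero.mp h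
  have sXZ : nab X Z = nab Z X := by
    have h := nab_torsion X Z hX hZ; rw [bXZ] at h; exact sub_eq_zero.mp h
  have sYZ : nab Y Z = nab Z Y := by
    have h := nab_torsion Y Z hY hZ; rw [bYZ] at h; exact sub_eq_zero.mp h
  have m1 := congrFun (nab_metric X Y Z hX hY hZ) p
  have m2 := congrFun (nab_metric Y X Z hY hX hZ) p
  have m3 := congrFun (nab_metric Z X Y hZ hX hY) p
  rw [← sXY] at m2
  rw [← sXZ, ← sYZ] at m3
  have cA := congrFun (g_comm ε Y (nab X Z)) p
  have cB := congrFun (g_comm ε X (nab Y Z)) p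
  have cC := congrFun (g_comm ε (nab X Z) Y) p
  linarith [m1, m2, m3, cA, cB, cC]

end Koszul

lemma chr_aux {ε : ℝ} (hε : ε = 1 ∨ ε = -1) (W : P → P) (v : P) (p : P)
    (h1 : 2 * g ε W e1 p = 2 * gp ε p v c1)
    (h2 : 2 * g ε W e2 p = 2 * gp ε p v c2)
    (h3 : 2 * g ε W e3 p = 2 * gp ε p v c3) : W p = v := by
  refine nondeg hε p _ _ ?_ ?_ ?_
  · have e : g ε W e1 p = gp ε p (W p) c1 := rfl
    linarith
  · have e : g ε W e2 p = gp ε p (W p) c2 := rfl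
    linarith
  · have e : g ε W e3 p = gp ε p (W p) c3 := rfl
    linarith

lemma g_e21 (ε : ℝ) : g ε e2 e1 = g ε e1 e2 := g_comm _ _ _
lemma g_e31 (ε : ℝ) : g ε e3 e1 = g ε e1 e3 := g_comm _ _ _
lemma g_e32 (ε : ℝ) : g ε e3 e2 = g ε e2 e3 := g_comm _ _ _

section Christoffel
variable {ε : ℝ} (nab : (P → P) → (P → P) → (P → P))
variable (nab_metric : ∀ X Y Z, Smooth X → Smooth Y → Smooth Z →
      der X (g ε Y Z) = fun p => g ε (nab X Y) Z p + g ε Y (nab X Z) p)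
variable (nab_torsion : ∀ X Y, Smooth X → Smooth Y → nab X Y - nab Y X = bracket X Y)


include nab_metric nab_torsion in
lemma chr11 (hε : ε = 1 ∨ ε = -1) : nab e1 e1 = fun p => γv ε p c1 c1 := by
  funext p
  have k1 := koszul nab nab_metric nab_torsion sm_e1 sm_e1 sm_e1
    (bracket_cc _ _) (bracket_cc _ _) (bracket_cc _ _) p
  have k2 := koszul nab nab_metric nab_torsion sm_e1 sm_e1 sm_e2
    (bracket_cc _ _) (bracket_cc _ _) (bracket_cc _ _) p
  have k3 := koszul nab nab_metric nab_torsion sm_e1 sm_e1 sm_e3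
    (bracket_cc _ _) (bracket_cc _ _) (bracket_cc _ _) p
  simp only [der_e1, der_e2, der_e3, g_e21, g_e31, g_e32, fd_g11, fd_g12, fd_g13,
    fd_g22, fd_g23, fd_g33, c1, c2, c3] at k1 k2 k3
  refine chr_aux hε _ _ p ?_ ?_ ?_
  · rw [k1]; simp [gp, γv, c1, c2, c3]; try ring; try tauto
  · rw [k2]; simp [gp, γv, c1, c2, c3]; try ring; try tauto
  · rw [k3]; simp [gp, γv, c1, c2, c3]; try ring; try tauto


include nab_metric nab_torsion in
lemma chr12 (hε : ε = 1 ∨ ε = -1) : nab e1 e2 = fun p => γv ε p c1 c2 := by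
  funext p
  have k1 := koszul nab nab_metric nab_torsion sm_e1 sm_e2 sm_e1
    (bracket_cc _ _) (bracket_cc _ _) (bracket_cc _ _) p
  have k2 := koszul nab nab_metric nab_torsion sm_e1 sm_e2 sm_e2
    (bracket_cc _ _) (bracket_cc _ _) (bracket_cc _ _) p
  have k3 := koszul nab nab_metric nab_torsion sm_e1 sm_e2 sm_e3
    (bracket_cc _ _) (bracket_cc _ _) (bracket_cc _ _) p
  simp only [der_e1, der_e2, der_e3, g_e21, g_e31, g_e32, fd_g11, fd_g12, fd_g13,
    fd_g22, fd_g23, fd_g33, c1, c2, c3] at k1 k2 k3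
  refine chr_aux hε _ _ p ?_ ?_ ?_
  · rw [k1]; simp [gp, γv, c1, c2, c3]; try ring; try tauto
  · rw [k2]; simp [gp, γv, c1, c2, c3]; try ring; try tauto
  · rw [k3]; simp [gp, γv, c1, c2, c3]; try ring; try tauto


include nab_metric nab_torsion in
lemma chr13 (hε : ε = 1 ∨ ε = -1) : nab e1 e3 = fun p => γv ε p c1 c3 := by
  funext p
  have k1 := koszul nab nab_metric nab_torsion sm_e1 sm_e3 sm_e1
    (bracket_cc _ _) (bracket_cc _ _) (bracket_cc _ _) p
  have k2 := koszul nab nab_metric nab_torsion sm_e1 sm_e3 sm_e2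
    (bracket_cc _ _) (bracket_cc _ _) (bracket_cc _ _) p
  have k3 := koszul nab nab_metric nab_torsion sm_e1 sm_e3 sm_e3
    (bracket_cc _ _) (bracket_cc _ _) (bracket_cc _ _) p
  simp only [der_e1, der_e2, der_e3, g_e21, g_e31, g_e32, fd_g11, fd_g12, fd_g13,
    fd_g22, fd_g23, fd_g33, c1, c2, c3] at k1 k2 k3
  refine chr_aux hε _ _ p ?_ ?_ ?_
  · rw [k1]; simp [gp, γv, c1, c2, c3]; try ring; try tauto
  · rw [k2]; simp [gp, γv, c1, c2, c3]; try ring; try tauto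
  · rw [k3]; simp [gp, γv, c1, c2, c3]; try ring; try tauto


include nab_metric nab_torsion in
lemma chr22 (hε : ε = 1 ∨ ε = -1) : nab e2 e2 = fun p => γv ε p c2 c2 := by
  funext p
  have k1 := koszul nab nab_metric nab_torsion sm_e2 sm_e2 sm_e1
    (bracket_cc _ _) (bracket_cc _ _) (bracket_cc _ _) p
  have k2 := koszul nab nab_metric nab_torsion sm_e2 sm_e2 sm_e2
    (bracket_cc _ _) (bracket_cc _ _) (bracket_cc _ _) p
  have k3 := koszul nab nab_metric nab_torsion sm_e2 sm_e2 sm_e3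
    (bracket_cc _ _) (bracket_cc _ _) (bracket_cc _ _) p
  simp only [der_e1, der_e2, der_e3, g_e21, g_e31, g_e32, fd_g11, fd_g12, fd_g13,
    fd_g22, fd_g23, fd_g33, c1, c2, c3] at k1 k2 k3
  refine chr_aux hε _ _ p ?_ ?_ ?_
  · rw [k1]; simp [gp, γv, c1, c2, c3]; try ring; try tauto
  · rw [k2]; simp [gp, γv, c1, c2, c3]; try ring; try tauto
  · rw [k3]; simp [gp, γv, c1, c2, c3]; try ring; try tauto


include nab_metric nab_torsion in
lemma chr23 (hε : ε = 1 ∨ ε = -1) : nab e2 e3 = fun p => γv ε p c2 c3 := by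
  funext p
  have k1 := koszul nab nab_metric nab_torsion sm_e2 sm_e3 sm_e1
    (bracket_cc _ _) (bracket_cc _ _) (bracket_cc _ _) p
  have k2 := koszul nab nab_metric nab_torsion sm_e2 sm_e3 sm_e2
    (bracket_cc _ _) (bracket_cc _ _) (bracket_cc _ _) p
  have k3 := koszul nab nab_metric nab_torsion sm_e2 sm_e3 sm_e3
    (bracket_cc _ _) (bracket_cc _ _) (bracket_cc _ _) p
  simp only [der_e1, der_e2, der_e3, g_e21, g_e31, g_e32, fd_g11, fd_g12, fd_g13,
    fd_g22, fd_g23, fd_g33, c1, c2, c3] at k1 k2 k3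
  refine chr_aux hε _ _ p ?_ ?_ ?_
  · rw [k1]; simp [gp, γv, c1, c2, c3]; try ring; try tauto
  · rw [k2]; simp [gp, γv, c1, c2, c3]; try ring; try tauto
  · rw [k3]; simp [gp, γv, c1, c2, c3]; try ring; try tauto


include nab_metric nab_torsion in
lemma chr33 (hε : ε = 1 ∨ ε = -1) : nab e3 e3 = fun p => γv ε p c3 c3 := by
  funext p
  have k1 := koszul nab nab_metric nab_torsion sm_e3 sm_e3 sm_e1
    (bracket_cc _ _) (bracket_cc _ _) (bracket_cc _ _) p
  have k2 := koszul nab nab_metric nab_torsion sm_e3 sm_e3 sm_e2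
    (bracket_cc _ _) (bracket_cc _ _) (bracket_cc _ _) p
  have k3 := koszul nab nab_metric nab_torsion sm_e3 sm_e3 sm_e3
    (bracket_cc _ _) (bracket_cc _ _) (bracket_cc _ _) p
  simp only [der_e1, der_e2, der_e3, g_e21, g_e31, g_e32, fd_g11, fd_g12, fd_g13,
    fd_g22, fd_g23, fd_g33, c1, c2, c3] at k1 k2 k3
  refine chr_aux hε _ _ p ?_ ?_ ?_
  · rw [k1]; simp [gp, γv, c1, c2, c3]; try ring; try tauto
  · rw [k2]; simp [gp, γv, c1, c2, c3]; try ring; try tauto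
  · rw [k3]; simp [gp, γv, c1, c2, c3]; try ring; try tauto


end Christoffel

section Expand
variable {ε : ℝ} (nab : (P → P) → (P → P) → (P → P))
variable (nab_addX : ∀ X Y Z, Smooth X → Smooth Y → Smooth Z →
      nab (X + Y) Z = nab X Z + nab Y Z)
variable (nab_smulX : ∀ (f : P → ℝ) (X Y : P → P), ContDiff ℝ (⊤ : ℕ∞) f → Smooth X → Smooth Y →
      nab (fun p => f p • X p) Y = fun p => f p • nab X Y p)
variable (nab_addY : ∀ X Y Z, Smooth X → Smooth Y → Smooth Z →
      nab X (Y + Z) = nab X Y + nab X Z)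
variable (nab_leibniz : ∀ (f : P → ℝ) (X Y : P → P), ContDiff ℝ (⊤ : ℕ∞) f → Smooth X → Smooth Y →
      nab X (fun p => f p • Y p) = fun p => der X f p • Y p + f p • nab X Y p)
variable (nab_metric : ∀ X Y Z, Smooth X → Smooth Y → Smooth Z →
      der X (g ε Y Z) = fun p => g ε (nab X Y) Z p + g ε Y (nab X Z) p)
variable (nab_torsion : ∀ X Y, Smooth X → Smooth Y → nab X Y - nab Y X = bracket X Y)

include nab_addX nab_smulX nab_addY nab_leibniz nab_metric nab_torsion in
lemma nab_expand (hε : ε = 1 ∨ ε = -1) {X Y : P → P} (hX : Smooth X) (hY : Smooth Y) :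
    nab X Y = D ε X Y := by
  have hXdec : X = (fun p => (X p).1 • e1 p) + (fun p => (X p).2.1 • e2 p)
      + (fun p => (X p).2.2 • e3 p) := by
    funext q; simp [e1, e2, e3, Prod.ext_iff]
  have hYdec : Y = (fun p => (Y p).1 • e1 p) + (fun p => (Y p).2.1 • e2 p)
      + (fun p => (Y p).2.2 • e3 p) := by
    funext q; simp [e1, e2, e3, Prod.ext_iff]
  have smX1 : Smooth (fun p => (X p).1 • e1 p) := (sm1 hX).smul sm_e1
  have smX2 : Smooth (fun p => (X p).2.1 • e2 p) := (sm2 hX).smul sm_e2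
  have smX3 : Smooth (fun p => (X p).2.2 • e3 p) := (sm3 hX).smul sm_e3
  have smY1 : Smooth (fun p => (Y p).1 • e1 p) := (sm1 hY).smul sm_e1
  have smY2 : Smooth (fun p => (Y p).2.1 • e2 p) := (sm2 hY).smul sm_e2
  have smY3 : Smooth (fun p => (Y p).2.2 • e3 p) := (sm3 hY).smul sm_e3
  have hXe : ∀ (Zc : P → P), Smooth Zc → nab X Zc = fun p =>
      (X p).1 • nab e1 Zc p + (X p).2.1 • nab e2 Zc p + (X p).2.2 • nab e3 Zc p := by
    intro Zc hZc
    conv_lhs => rw [hXdec]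
    rw [nab_addX ((fun p => (X p).1 • e1 p) + (fun p => (X p).2.1 • e2 p))
          (fun p => (X p).2.2 • e3 p) Zc (smX1.add smX2) smX3 hZc,
        nab_addX _ _ _ smX1 smX2 hZc,
        nab_smulX _ _ _ (sm1 hX) sm_e1 hZc, nab_smulX _ _ _ (sm2 hX) sm_e2 hZc,
        nab_smulX _ _ _ (sm3 hX) sm_e3 hZc]
    rfl
  have s21 : nab e2 e1 = nab e1 e2 :=
    sub_eq_zero.mp (by rw [nab_torsion e2 e1 sm_e2 sm_e1]; exact bracket_cc _ _)
  have s31 : nab e3 e1 = nab e1 e3 :=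
    sub_eq_zero.mp (by rw [nab_torsion e3 e1 sm_e3 sm_e1]; exact bracket_cc _ _)
  have s32 : nab e3 e2 = nab e2 e3 :=
    sub_eq_zero.mp (by rw [nab_torsion e3 e2 sm_e3 sm_e2]; exact bracket_cc _ _)
  conv_lhs => rw [hYdec]
  rw [nab_addY X ((fun p => (Y p).1 • e1 p) + (fun p => (Y p).2.1 • e2 p))
        (fun p => (Y p).2.2 • e3 p) hX (smY1.add smY2) smY3,
      nab_addY _ _ _ hX smY1 smY2,
      nab_leibniz _ _ _ (sm1 hY) hX sm_e1, nab_leibniz _ _ _ (sm2 hY) hX sm_e2,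
      nab_leibniz _ _ _ (sm3 hY) hX sm_e3,
      hXe e1 sm_e1, hXe e2 sm_e2, hXe e3 sm_e3,
      s21, s31, s32,
      chr11 nab nab_metric nab_torsion hε, chr12 nab nab_metric nab_torsion hε,
      chr13 nab nab_metric nab_torsion hε, chr22 nab nab_metric nab_torsion hε,
      chr23 nab nab_metric nab_torsion hε, chr33 nab nab_metric nab_torsion hε]
  funext p
  have d1 : der X (fun q => (Y q).1) p = (fderiv ℝ Y p (X p)).1 := fd1 hY p (X p)
  have d2 : der X (fun q => (Y q).2.1) p = (fderiv ℝ Y p (X p)).2.1 := fd2 hY p (X p)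
  have d3 : der X (fun q => (Y q).2.2) p = (fderiv ℝ Y p (X p)).2.2 := fd3 hY p (X p)
  show _ = D ε X Y p
  simp only [Pi.add_apply, d1, d2, d3, D]
  simp [e1, e2, e3, γv, c1, c2, c3, Prod.ext_iff]
  refine ⟨by ring, by ring, by ring⟩

end Expand

lemma sm_gammaterm (ε : ℝ) {X Y : P → P} (hX : Smooth X) (hY : Smooth Y) :
    ContDiff ℝ (⊤ : ℕ∞) (fun q => γv ε q (X q) (Y q)) := by
  have h1 : ContDiff ℝ (⊤ : ℕ∞) X := hX
  have h2 : ContDiff ℝ (⊤ : ℕ∞) Y := hY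
  unfold γv
  fun_prop

lemma sm_D (ε : ℝ) {X Y : P → P} (hX : Smooth X) (hY : Smooth Y) : Smooth (D ε X Y) := by
  unfold D Smooth
  exact (sm_dYX hX hY).add (sm_gammaterm ε hX hY)

lemma fd_D (ε : ℝ) {X Y : P → P} (hX : Smooth X) (hY : Smooth Y) (p w : P) :
    fderiv ℝ (D ε X Y) p w = fderiv ℝ (fderiv ℝ Y) p w (X p) + fderiv ℝ Y p (fderiv ℝ X p w)
      + γd ε p (X p) (Y p) w (fderiv ℝ X p w) (fderiv ℝ Y p w) := by
  obtain ⟨L, hL, hLw⟩ := hfd_gamma ε hX hY p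
  have h := ((hfd_fderiv hY p).clm_apply (hfd hX p)).add hL
  rw [show D ε X Y = fun q => fderiv ℝ Y q (X q) + γv ε q (X q) (Y q) from rfl,
    (show HasFDerivAt (fun q => fderiv ℝ Y q (X q) + γv ε q (X q) (Y q)) _ p from h).fderiv]
  simp [hLw]
  abel

lemma sm_brk {X : P → P} (hX : Smooth X) (c : P) :
    Smooth (fun p => fderiv ℝ X p c) :=
  (sm_fderiv hX).clm_apply contDiff_const

lemma der_η {Y : P → P} (hY : Smooth Y) (X : P → P) (p : P) :
    der X (η Y) p = (1 / 2) * (-(X p).2.1 * (Y p).1 - p.2.1 * (fderiv ℝ Y p (X p)).1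
      + (fderiv ℝ Y p (X p)).2.2) := by
  have hy : HasFDerivAt (fun q : P => q.2.1)
      ((ContinuousLinearMap.fst ℝ ℝ ℝ).comp (ContinuousLinearMap.snd ℝ ℝ (ℝ × ℝ))) p := by
    have h := (hasFDerivAt_id (𝕜 := ℝ) p).snd.fst
    rwa [ContinuousLinearMap.comp_id] at h
  have hy1 := (hfd hY p).fst
  have hy3 := (hfd hY p).snd.snd
  have h := ((hy.neg.mul hy1).add hy3).const_mul ((1:ℝ)/2)
  show fderiv ℝ (fun q => (1/2 : ℝ) * (-q.2.1 * (Y q).1 + (Y q).2.2)) p (X p) = _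
  rw [(show HasFDerivAt (fun q : P => (1/2 : ℝ) * (-q.2.1 * (Y q).1 + (Y q).2.2)) _ p from h).fderiv]
  simp
  ring

lemma sm_φ {Y : P → P} (hY : Smooth Y) : Smooth (φ Y) := by
  have h2 : ContDiff ℝ (⊤ : ℕ∞) Y := hY
  unfold φ Smooth
  fun_prop

lemma fd_φ {Y : P → P} (hY : Smooth Y) (p v : P) :
    fderiv ℝ (φ Y) p v = ((fderiv ℝ Y p v).2.1, -(fderiv ℝ Y p v).1,
      v.2.1 * (Y p).2.1 + p.2.1 * (fderiv ℝ Y p v).2.1) := by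
  have hy : HasFDerivAt (fun q : P => q.2.1)
      ((ContinuousLinearMap.fst ℝ ℝ ℝ).comp (ContinuousLinearMap.snd ℝ ℝ (ℝ × ℝ))) p := by
    have h := (hasFDerivAt_id (𝕜 := ℝ) p).snd.fst
    rwa [ContinuousLinearMap.comp_id] at h
  have hy1 := (hfd hY p).fst
  have hy2 := (hfd hY p).snd.fst
  have h := hy2.prodMk ((hy1.neg).prodMk (hy.mul hy2))
  show fderiv ℝ (fun q => ((Y q).2.1, -(Y q).1, q.2.1 * (Y q).2.1)) p v = _
  rw [(show HasFDerivAt (fun q : P => ((Y q).2.1, -(Y q).1, q.2.1 * (Y q).2.1)) _ p from h).fderiv]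
  simp [Prod.ext_iff]
  ring

theorem stmt9 (ε : ℝ) (hε : ε = 1 ∨ ε = -1)
    (nab : (P → P) → (P → P) → (P → P))
    -- `nab` is the Levi-Civita connection of `g ε`:
    (nab_addX : ∀ X Y Z, Smooth X → Smooth Y → Smooth Z →
      nab (X + Y) Z = nab X Z + nab Y Z)
    (nab_smulX : ∀ (f : P → ℝ) (X Y : P → P), ContDiff ℝ (⊤ : ℕ∞) f → Smooth X → Smooth Y →
      nab (fun p => f p • X p) Y = fun p => f p • nab X Y p)
    (nab_addY : ∀ X Y Z, Smooth X → Smooth Y → Smooth Z →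
      nab X (Y + Z) = nab X Y + nab X Z)
    (nab_leibniz : ∀ (f : P → ℝ) (X Y : P → P), ContDiff ℝ (⊤ : ℕ∞) f → Smooth X → Smooth Y →
      nab X (fun p => f p • Y p) = fun p => der X f p • Y p + f p • nab X Y p)
    (nab_metric : ∀ X Y Z, Smooth X → Smooth Y → Smooth Z →
      der X (g ε Y Z) = fun p => g ε (nab X Y) Z p + g ε Y (nab X Z) p)
    (nab_torsion : ∀ X Y, Smooth X → Smooth Y → nab X Y - nab Y X = bracket X Y) :
    -- `(φ, ξ, η, g)` is an almost contact pseudo-metric structure: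
    (η ξ = fun _ => 1) ∧
    (∀ X, φ (φ X) = fun p => -(X p) + η X p • ξ p) ∧
    (∀ X Y, g ε (φ X) (φ Y) = fun p => g ε X Y p - ε * η X p * η Y p) ∧
    (∀ X, η X = fun p => ε * g ε ξ X p) ∧
    -- it is contact: `g(X, φY) = dη(X, Y)`:
    (∀ X Y, Smooth X → Smooth Y → g ε X (φ Y)
        = fun p => (1 / 2) * (der X (η Y) p - der Y (η X) p - η (bracket X Y) p)) ∧
    -- it is Sasakian: `(∇_X φ)Y = g(X,Y)ξ - ε η(Y) X`:
    (∀ X Y, Smooth X → Smooth Y →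
        nab X (φ Y) - φ (nab X Y) = fun p => g ε X Y p • ξ p - (ε * η Y p) • X p) ∧
    -- and its Ricci tensor is `Ric = -2εg + 4 η⊗η`:
    (∀ X Y, Smooth X → Smooth Y →
        Ric nab X Y = fun p => -2 * ε * g ε X Y p + 4 * η X p * η Y p) := by
  have NE : ∀ {A B : P → P}, Smooth A → Smooth B → nab A B = D ε A B :=
    fun hA hB => nab_expand nab nab_addX nab_smulX nab_addY nab_leibniz nab_metric
      nab_torsion hε hA hB
  refine ⟨?_, ?_, ?_, ?_, ?_, ?_, ?_⟩
  · funext p; simp [η, ξ]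
  · intro X; funext p
    refine Prod.ext ?_ (Prod.ext ?_ ?_) <;> simp [φ, η, ξ] <;> ring
  · intro X Y; funext p; simp [g, η, φ]; ring
  · intro X; funext p; rcases hε with h | h <;> subst h <;> (simp [g, η, ξ]; try ring)
  · intro X Y hX hY; funext p
    rw [der_η hY X p, der_η hX Y p]
    simp [g, η, φ, bracket]
    ring
  · intro X Y hX hY
    have h1 : nab X (φ Y) = D ε X (φ Y) := NE hX (sm_φ hY)
    have h2 : nab X Y = D ε X Y := NE hX hY
    rw [h1, h2]
    funext p
    simp only [Pi.sub_apply, D]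
    rw [fd_φ hY p (X p)]
    rcases hε with h | h <;> subst h <;>
      (refine Prod.ext ?_ (Prod.ext ?_ ?_) <;> simp [γv, φ, g, η, ξ, D] <;> ring)
  · intro X Y hX hY
    funext p
    have hXY : nab X Y = D ε X Y := NE hX hY
    have hR : ∀ c : P, RCurv nab (fun _ => c) X Y p
        = fderiv ℝ (D ε X Y) p c + γv ε p c (D ε X Y p)
          - (fderiv ℝ (D ε (fun _ => c) Y) p (X p) + γv ε p (X p) (D ε (fun _ => c) Y p))
          - (fderiv ℝ Y p (fderiv ℝ X p c) + γv ε p (fderiv ℝ X p c) (Y p)) := by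
      intro c
      have hc : Smooth (fun _ : P => c) := contDiff_const
      have E1 : nab (fun _ => c) (nab X Y) = D ε (fun _ => c) (D ε X Y) := by
        rw [hXY]; exact NE hc (sm_D ε hX hY)
      have E2 : nab X (nab (fun _ => c) Y) = D ε X (D ε (fun _ => c) Y) := by
        rw [NE hc hY]; exact NE hX (sm_D ε hc hY)
      have E3 : nab (bracket (fun _ => c) X) Y = D ε (fun q => fderiv ℝ X q c) Y := by
        rw [bracket_const c X]; exact NE (sm_brk hX c) hY
      simp only [RCurv, Pi.sub_apply, E1, E2, E3]
      rfl
    show (RCurv nab e1 X Y p).1 + (RCurv nab e2 X Y p).2.1 + (RCurv nab e3 X Y p).2.2 = _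
    rw [show RCurv nab e1 X Y p = RCurv nab (fun _ => c1) X Y p from rfl,
        show RCurv nab e2 X Y p = RCurv nab (fun _ => c2) X Y p from rfl,
        show RCurv nab e3 X Y p = RCurv nab (fun _ => c3) X Y p from rfl,
        hR c1, hR c2, hR c3,
        fd_D ε hX hY p c1, fd_D ε hX hY p c2, fd_D ε hX hY p c3,
        fd_D ε (contDiff_const : Smooth (fun _ : P => c1)) hY p (X p),
        fd_D ε (contDiff_const : Smooth (fun _ : P => c2)) hY p (X p),
        fd_D ε (contDiff_const : Smooth (fun _ : P => c3)) hY p (X p),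
        symm2 hY p c1 (X p), symm2 hY p c2 (X p), symm2 hY p c3 (X p)]
    simp only [D]
    rw [lin_expand (fderiv ℝ Y p) (X p)]
    rcases hε with h | h <;> subst h <;>
      (simp [γv, γd, g, η, c1, c2, c3, fderiv_const]; ring)

end Stmt9
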